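/- arXiv:1503.01239 — 2 statements merged into one kernel-verified Lean document; each statement's English description precedes it below -/
import Mathlib

section
/- Let μ > 0 and K ∈ ℝ^{s×t} of rank l, with singular value decomposition K = U Σ Vᵀ where U ∈ ℝ^{s×l}, V ∈ ℝ^{t×l} have orthonormal columns and Σ = diag(σ₁,…,σ_l) contains the positive singular values of K. Then the matrix D_μ(K) := U · diag(max{σ₁ − μ, 0}, …, max{σ_l − μ, 0}) · Vᵀ is a minimizer of the function L ↦ μ‖L‖_* + (1/2)‖L − K‖_F² over ℝ^{s×t}. -/
open Matrix BigOperators Finset Filter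

/-- Squared Frobenius norm. -/
noncomputable def frobSq {m n : ℕ} (A : Matrix (Fin m) (Fin n) ℝ) : ℝ :=
  ∑ i, ∑ j, (A i j) ^ 2

/-- Frobenius norm. -/
noncomputable def frob {m n : ℕ} (A : Matrix (Fin m) (Fin n) ℝ) : ℝ :=
  Real.sqrt (frobSq A)

/-- Entrywise ℓ₁ norm. -/
noncomputable def l1 {m n : ℕ} (A : Matrix (Fin m) (Fin n) ℝ) : ℝ :=
  ∑ i, ∑ j, |A i j|

/-- ℓ_{2,1} norm: sum of Euclidean norms of the rows. -/
noncomputable def l21 {m n : ℕ} (A : Matrix (Fin m) (Fin n) ℝ) : ℝ :=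
  ∑ i, Real.sqrt (∑ j, (A i j) ^ 2)

/-- Nuclear norm: sum of singular values (square roots of eigenvalues of AᵀA). -/
noncomputable def nuclearNorm {m n : ℕ} (A : Matrix (Fin m) (Fin n) ℝ) : ℝ :=
  ∑ i, Real.sqrt ((Matrix.isHermitian_conjTranspose_mul_self A).eigenvalues i)

/-- Matrix inner product ⟨P,Q⟩ = tr(PᵀQ). -/
noncomputable def minner {m n : ℕ} (A B : Matrix (Fin m) (Fin n) ℝ) : ℝ :=
  ∑ i, ∑ j, A i j * B i j

/-- ℓ_{2,0}: number of nonzero rows. -/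
noncomputable def l20 {m n : ℕ} (A : Matrix (Fin m) (Fin n) ℝ) : ℕ :=
  {i | A i ≠ 0}.ncard

/-!
Put `τᵢ = max (σᵢ - μ) 0`. Then `K - D = μ • G` with `G = U diag((σᵢ - τᵢ)/μ) Vᵀ`, a contraction
(its diagonal entries lie in `[0, 1]`) satisfying `⟨G, D⟩ = ∑ τᵢ = ‖D‖_*`: the matrix `G` is a dual
certificate, i.e. `(K - D)/μ` is a subgradient of the nuclear norm at `D`. Indeed `⟨G, L⟩ ≤ ‖L‖_*`
for every contraction `G`: diagonalising `LᵀL = W diag(λ) Wᵀ`, the `j`-th diagonal entry of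
`(GW)ᵀ(LW)` is at most `√λⱼ` by Cauchy–Schwarz. Expanding
`‖L - K‖² = ‖L - D‖² + 2⟨L - D, D - K⟩ + ‖D - K‖²` then gives the claim.
-/

open Matrix

section Contraction

variable {k m n : Type*} [Fintype m] [Fintype n]

def IsContraction (G : Matrix m n ℝ) : Prop :=
  ∀ x : n → ℝ, G *ᵥ x ⬝ᵥ G *ᵥ x ≤ x ⬝ᵥ x

lemma mulVec_dotProduct_mulVec_self (M : Matrix m n ℝ) (x : n → ℝ) :
    M *ᵥ x ⬝ᵥ M *ᵥ x = x ⬝ᵥ (Mᵀ * M) *ᵥ x := by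
  rw [← mulVec_mulVec, dotProduct_mulVec x, vecMul_transpose]

lemma IsContraction.mul [Fintype k] {A : Matrix k m ℝ} {B : Matrix m n ℝ} (hA : IsContraction A)
    (hB : IsContraction B) : IsContraction (A * B) := fun x => by
  rw [← mulVec_mulVec]
  exact (hA _).trans (hB x)

lemma isContraction_of_transpose_mul_self_eq_diagonal [DecidableEq n] {M : Matrix m n ℝ}
    {c : n → ℝ} (hM : Mᵀ * M = diagonal c) (hc : ∀ j, c j ≤ 1) : IsContraction M := fun x => by
  rw [mulVec_dotProduct_mulVec_self, hM]
  refine Finset.sum_le_sum fun j _ => ?_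
  simp only [mulVec_diagonal]
  nlinarith [hc j, mul_self_nonneg (x j)]

/-- Bessel's inequality for the orthonormal columns of `N`. -/
lemma isContraction_transpose_of_transpose_mul_self_eq_one [DecidableEq n] {N : Matrix m n ℝ}
    (hN : Nᵀ * N = 1) : IsContraction Nᵀ := fun x => by
  set y := Nᵀ *ᵥ x
  have hNy : N *ᵥ y ⬝ᵥ N *ᵥ y = y ⬝ᵥ y := by
    rw [mulVec_dotProduct_mulVec_self, hN, one_mulVec]
  have hxNy : x ⬝ᵥ N *ᵥ y = y ⬝ᵥ y := by
    rw [dotProduct_mulVec, ← mulVec_transpose]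
  have hres := dotProduct_self_star_nonneg (x - N *ᵥ y)
  simp only [star_trivial, sub_dotProduct, dotProduct_sub, dotProduct_comm (N *ᵥ y) x, hNy,
    hxNy] at hres
  linarith

lemma transpose_mul_self_apply_self [DecidableEq n] (M : Matrix m n ℝ) (j : n) :
    (Mᵀ * M) j j = M *ᵥ Pi.single j 1 ⬝ᵥ M *ᵥ Pi.single j 1 := by
  rw [mulVec_dotProduct_mulVec_self]
  simp

lemma IsContraction.transpose_mul_self_apply_le [Fintype k] [DecidableEq k] {G : Matrix m n ℝ}
    (hG : IsContraction G) (W : Matrix n k ℝ) (j : k) :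
    ((G * W)ᵀ * (G * W)) j j ≤ (Wᵀ * W) j j := by
  rw [transpose_mul_self_apply_self, transpose_mul_self_apply_self, ← mulVec_mulVec]
  exact hG _

end Contraction

lemma sq_transpose_mul_apply_le {k m n : Type*} [Fintype m] (A : Matrix m n ℝ) (B : Matrix m k ℝ)
    (i : n) (j : k) : (Aᵀ * B) i j ^ 2 ≤ (Aᵀ * A) i i * (Bᵀ * B) j j := by
  simpa only [mul_apply, transpose_apply, sq] using
    Finset.sum_mul_sq_le_sq_mul_sq Finset.univ (fun r => A r i) (fun r => B r j)

lemma exists_orthogonal_transpose_mul_self_eq_diagonal {m n : Type*} [Fintype m] [Fintype n]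
    [DecidableEq n] (L : Matrix m n ℝ) :
    ∃ W : Matrix n n ℝ, Wᵀ * W = 1 ∧ W * Wᵀ = 1 ∧
      (L * W)ᵀ * (L * W) = diagonal (isHermitian_conjTranspose_mul_self L).eigenvalues := by
  set hL := isHermitian_conjTranspose_mul_self L
  have hdiag := hL.conjStarAlgAut_star_eigenvectorUnitary
  have hW := hL.eigenvectorUnitary.2
  simp only [Unitary.conjStarAlgAut_apply, Unitary.coe_star, star_star] at hdiag
  set W : Matrix n n ℝ := (hL.eigenvectorUnitary : Matrix n n ℝ)
  clear_value W
  simp only [star_eq_conjTranspose, conjTranspose_eq_transpose_of_trivial] at hdiag hW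
  refine ⟨W, mem_unitaryGroup_iff'.1 hW, ?_, ?_⟩
  · simpa [star_eq_conjTranspose] using mem_unitaryGroup_iff.1 hW
  · convert hdiag using 1 <;> simp [Matrix.mul_assoc]

section NuclearNorm

variable {m n : ℕ}

lemma minner_eq_trace (A B : Matrix (Fin m) (Fin n) ℝ) : minner A B = trace (Aᵀ * B) := by
  simp only [minner, trace, Matrix.diag, mul_apply, transpose_apply]
  exact Finset.sum_comm

lemma minner_mul_of_mul_transpose_eq_one (A B : Matrix (Fin m) (Fin n) ℝ)
    {W : Matrix (Fin n) (Fin n) ℝ} (hW : W * Wᵀ = 1) : minner (A * W) (B * W) = minner A B := by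
  rw [minner_eq_trace, minner_eq_trace, transpose_mul, Matrix.mul_assoc, trace_mul_comm,
    Matrix.mul_assoc, Matrix.mul_assoc, hW, Matrix.mul_one]

lemma minner_le_nuclearNorm {G : Matrix (Fin m) (Fin n) ℝ} (hG : IsContraction G)
    (L : Matrix (Fin m) (Fin n) ℝ) : minner G L ≤ nuclearNorm L := by
  obtain ⟨W, hWW, hWW', hLW⟩ := exists_orthogonal_transpose_mul_self_eq_diagonal L
  rw [← minner_mul_of_mul_transpose_eq_one G L hWW', minner_eq_trace, nuclearNorm, trace]
  refine Finset.sum_le_sum fun j _ => (le_abs_self _).trans (Real.abs_le_sqrt ?_)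
  calc ((G * W)ᵀ * (L * W)) j j ^ 2
      ≤ ((G * W)ᵀ * (G * W)) j j * ((L * W)ᵀ * (L * W)) j j := sq_transpose_mul_apply_le _ _ j j
    _ ≤ 1 * (isHermitian_conjTranspose_mul_self L).eigenvalues j := by
        rw [hLW, diagonal_apply_eq]
        gcongr
        · exact eigenvalues_conjTranspose_mul_self_nonneg L j
        · simpa [hWW] using hG.transpose_mul_self_apply_le W j
    _ = _ := one_mul _

lemma exists_isContraction_minner_eq_nuclearNorm (L : Matrix (Fin m) (Fin n) ℝ) :
    ∃ G : Matrix (Fin m) (Fin n) ℝ, IsContraction G ∧ minner G L = nuclearNorm L := by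
  obtain ⟨W, hWW, hWW', hLW⟩ := exists_orthogonal_transpose_mul_self_eq_diagonal L
  set ev := (isHermitian_conjTranspose_mul_self L).eigenvalues
  -- `(√0)⁻¹ = 0`, so `L W diag f Wᵀ` is the partial isometry of the polar decomposition of `L`.
  set f : Fin n → ℝ := fun j => (√(ev j))⁻¹
  have hfev : ∀ j, f j * ev j = √(ev j) := fun j => by
    rw [inv_mul_eq_div, Real.div_sqrt]
  refine ⟨L * W * diagonal f * Wᵀ, ?_, ?_⟩
  · refine .mul (isContraction_of_transpose_mul_self_eq_diagonal (c := fun j => √(ev j) * f j) ?_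
      fun j => mul_inv_le_one) (isContraction_of_transpose_mul_self_eq_diagonal (c := 1) ?_
      fun _ => le_rfl)
    · rw [transpose_mul, diagonal_transpose, Matrix.mul_assoc, ← Matrix.mul_assoc _ (L * W), hLW]
      simp [diagonal_mul_diagonal, ← hfev, mul_comm]
    · simpa using hWW'
  · rw [← minner_mul_of_mul_transpose_eq_one _ L hWW', Matrix.mul_assoc _ Wᵀ, hWW, Matrix.mul_one,
      minner_eq_trace, transpose_mul, diagonal_transpose, Matrix.mul_assoc, hLW,
      diagonal_mul_diagonal, trace_diagonal, nuclearNorm]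
    exact Finset.sum_congr rfl fun j _ => hfev j

end NuclearNorm

section SVD

variable {s t l : ℕ} {U : Matrix (Fin s) (Fin l) ℝ} {V : Matrix (Fin t) (Fin l) ℝ}

lemma transpose_svd_mul_svd (hU : Uᵀ * U = 1) (c d : Fin l → ℝ) :
    (U * diagonal c * Vᵀ)ᵀ * (U * diagonal d * Vᵀ) = V * diagonal (c * d) * Vᵀ := by
  simp only [transpose_mul, transpose_transpose, diagonal_transpose, Matrix.mul_assoc]
  rw [← Matrix.mul_assoc Uᵀ, hU, Matrix.one_mul, ← Matrix.mul_assoc (diagonal c),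
    diagonal_mul_diagonal]
  rfl

lemma minner_svd_svd (hU : Uᵀ * U = 1) (hV : Vᵀ * V = 1) (c d : Fin l → ℝ) :
    minner (U * diagonal c * Vᵀ) (U * diagonal d * Vᵀ) = ∑ i, c i * d i := by
  rw [minner_eq_trace, transpose_svd_mul_svd hU, trace_mul_cycle, hV, Matrix.one_mul,
    trace_diagonal]
  rfl

lemma isContraction_svd (hU : Uᵀ * U = 1) (hV : Vᵀ * V = 1) {c : Fin l → ℝ}
    (hc : ∀ i, |c i| ≤ 1) : IsContraction (U * diagonal c * Vᵀ) := by
  refine .mul (isContraction_of_transpose_mul_self_eq_diagonal (c := c * c) ?_ fun i => ?_)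
    (isContraction_transpose_of_transpose_mul_self_eq_one hV)
  · rw [transpose_mul, diagonal_transpose, Matrix.mul_assoc, ← Matrix.mul_assoc Uᵀ, hU,
      Matrix.one_mul, diagonal_mul_diagonal]
    rfl
  · simpa [← sq, sq_le_one_iff_abs_le_one] using hc i

lemma IsContraction.minner_svd_le {G : Matrix (Fin s) (Fin t) ℝ} (hG : IsContraction G)
    (hU : Uᵀ * U = 1) (hV : Vᵀ * V = 1) {τ : Fin l → ℝ} (hτ : ∀ i, 0 ≤ τ i) :
    minner G (U * diagonal τ * Vᵀ) ≤ ∑ i, τ i := by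
  rw [minner_eq_trace, ← Matrix.mul_assoc, trace_mul_comm, ← Matrix.mul_assoc,
    ← Matrix.mul_assoc, ← transpose_mul, trace]
  refine Finset.sum_le_sum fun i _ => ?_
  rw [diag_apply, mul_diagonal]
  refine mul_le_of_le_one_left (hτ i) ((le_abs_self _).trans ?_)
  rw [← sq_le_one_iff_abs_le_one]
  calc ((G * V)ᵀ * U) i i ^ 2 ≤ ((G * V)ᵀ * (G * V)) i i * (Uᵀ * U) i i :=
        sq_transpose_mul_apply_le _ _ i i
    _ ≤ 1 := by
        rw [hU, one_apply_eq, mul_one]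
        simpa [hV] using hG.transpose_mul_self_apply_le V i

lemma nuclearNorm_svd (hU : Uᵀ * U = 1) (hV : Vᵀ * V = 1) {τ : Fin l → ℝ} (hτ : ∀ i, 0 ≤ τ i) :
    nuclearNorm (U * diagonal τ * Vᵀ) = ∑ i, τ i := by
  refine le_antisymm ?_ ?_
  · obtain ⟨G, hG, hGD⟩ := exists_isContraction_minner_eq_nuclearNorm (U * diagonal τ * Vᵀ)
    exact hGD ▸ hG.minner_svd_le hU hV hτ
  · have := minner_le_nuclearNorm (isContraction_svd hU hV (c := 1) fun _ => by simp)
      (U * diagonal τ * Vᵀ)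
    rw [minner_svd_svd hU hV] at this
    simpa using this

end SVD

lemma frobSq_add {m n : ℕ} (A B : Matrix (Fin m) (Fin n) ℝ) :
    frobSq (A + B) = frobSq A + 2 * minner A B + frobSq B := by
  simp only [frobSq, minner, Matrix.add_apply, Finset.mul_sum, ← Finset.sum_add_distrib]
  exact Finset.sum_congr rfl fun i _ => Finset.sum_congr rfl fun j _ => by ring

lemma objective_le_of_dual_certificate {m n : ℕ} {μ : ℝ} (hμ : 0 ≤ μ)
    {K D G : Matrix (Fin m) (Fin n) ℝ} (hG : IsContraction G) (hGD : minner G D = nuclearNorm D)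
    (hKD : K - D = μ • G) (L : Matrix (Fin m) (Fin n) ℝ) :
    μ * nuclearNorm D + 1 / 2 * frobSq (D - K) ≤ μ * nuclearNorm L + 1 / 2 * frobSq (L - K) := by
  have hsplit : frobSq (L - K) = frobSq (L - D) + 2 * minner (L - D) (D - K) + frobSq (D - K) := by
    rw [← frobSq_add, sub_add_sub_cancel]
  have hcross : minner (L - D) (D - K) = μ * (minner G D - minner G L) := by
    rw [← neg_sub K D, hKD]
    simp only [minner, Finset.mul_sum, ← Finset.sum_sub_distrib]
    exact Finset.sum_congr rfl fun i _ => Finset.sum_congr rfl fun j _ => by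
      simp only [Matrix.sub_apply, Matrix.neg_apply, Matrix.smul_apply, smul_eq_mul]
      ring
  have hLD : 0 ≤ frobSq (L - D) := by unfold frobSq; positivity
  have hdual := mul_le_mul_of_nonneg_left (minner_le_nuclearNorm hG L) hμ
  rw [hsplit, hcross, hGD]
  linarith

theorem svt_is_minimizer_general {s t l : ℕ} (μ : ℝ) (hμ : 0 < μ)
    (K : Matrix (Fin s) (Fin t) ℝ)
    (U : Matrix (Fin s) (Fin l) ℝ) (V : Matrix (Fin t) (Fin l) ℝ) (σ : Fin l → ℝ)
    (hU : Uᵀ * U = 1) (hV : Vᵀ * V = 1) (hσ : ∀ i, 0 < σ i)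
    (hK : K = U * Matrix.diagonal σ * Vᵀ) :
    let D : Matrix (Fin s) (Fin t) ℝ :=
      U * Matrix.diagonal (fun i => max (σ i - μ) 0) * Vᵀ
    ∀ L : Matrix (Fin s) (Fin t) ℝ,
      μ * nuclearNorm D + (1 / 2) * frobSq (D - K)
        ≤ μ * nuclearNorm L + (1 / 2) * frobSq (L - K) := by
  intro D
  set τ : Fin l → ℝ := fun i => max (σ i - μ) 0
  set c : Fin l → ℝ := fun i => (σ i - τ i) / μ
  have hτ : ∀ i, 0 ≤ τ i := fun i => le_max_right _ _
  have hc : ∀ i, |c i| ≤ 1 := fun i => by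
    have : σ i - μ ≤ τ i := le_max_left _ _
    have : τ i ≤ σ i := max_le (by linarith) (hσ i).le
    rw [abs_le, le_div_iff₀ hμ, div_le_one hμ]
    constructor <;> linarith
  have hcτ : ∀ i, c i * τ i = τ i := fun i => by
    rcases max_cases (σ i - μ) 0 with ⟨h, -⟩ | ⟨h, -⟩
    · simp only [c, τ, h, sub_sub_cancel, div_self hμ.ne', one_mul]
    · simp [τ, h]
  have hKD : K - D = μ • (U * diagonal c * Vᵀ) := by
    have : σ - τ = μ • c := funext fun i => (mul_div_cancel₀ _ hμ.ne').symm
    rw [hK, ← Matrix.sub_mul, ← Matrix.mul_sub, diagonal_sub, ← Pi.sub_def, this, diagonal_smul,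
      Matrix.mul_smul, Matrix.smul_mul]
  refine objective_le_of_dual_certificate hμ.le (isContraction_svd hU hV hc) ?_ hKD
  rw [minner_svd_svd hU hV, nuclearNorm_svd hU hV hτ]
  exact Finset.sum_congr rfl fun i _ => hcτ i

/-- singular value shrinkage.  Let μ > 0 and K ∈ ℝ^{s×t} of rank l with
SVD K = U Σ Vᵀ, where U, V have orthonormal columns and Σ = diag(σ₁,…,σ_l) contains the
positive singular values.  Then D_μ(K) = U diag(max{σᵢ − μ, 0}) Vᵀ minimizes
L ↦ μ‖L‖_* + (1/2)‖L − K‖_F². -/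
theorem svt_is_minimizer {s t l : ℕ} (μ : ℝ) (hμ : 0 < μ)
    (K : Matrix (Fin s) (Fin t) ℝ)
    (U : Matrix (Fin s) (Fin l) ℝ) (V : Matrix (Fin t) (Fin l) ℝ) (σ : Fin l → ℝ)
    (hU : Uᵀ * U = 1) (hV : Vᵀ * V = 1) (hσ : ∀ i, 0 < σ i)
    (hK : K = U * Matrix.diagonal σ * Vᵀ) (hrank : K.rank = l) :
    let D : Matrix (Fin s) (Fin t) ℝ :=
      U * Matrix.diagonal (fun i => max (σ i - μ) 0) * Vᵀ
    ∀ L : Matrix (Fin s) (Fin t) ℝ,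
      μ * nuclearNorm D + (1 / 2) * frobSq (D - K)
        ≤ μ * nuclearNorm L + (1 / 2) * frobSq (L - K) :=
  svt_is_minimizer_general μ hμ K U V σ hU hV hσ hK
end

section
/- Let X ∈ ℝ^{d×n}, T ∈ ℝ^{n×n}, α > 0, and β, γ, η ≥ 0. Then the function F(W) = ‖X − XWX‖_F² + α‖W‖_{2,1} + β‖Wᵀ‖_{2,1} + γ‖W‖_* + η‖T ⊙ (WX)‖₁ is coercive on ℝ^{n×d} (F(W) → ∞ as ‖W‖_F → ∞) and attains its infimum, i.e., there exists W* ∈ ℝ^{n×d} with F(W*) ≤ F(W) for all W ∈ ℝ^{n×d}. -/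
open Matrix BigOperators Finset Filter

/-!
Every term of `F` is nonnegative, so `F W ≥ α‖W‖_{2,1} ≥ α‖W‖_F`, which gives coercivity.
`F` is continuous: the only nontrivial term is the nuclear norm, which is the trace of
`√(WᵀW)` and hence continuous by continuity of the continuous functional calculus in its
argument. A continuous coercive function on the proper space of matrices attains its minimum.
-/

namespace Matrix

theorem IsHermitian.trace_cfc {ι 𝕜 : Type*} [Fintype ι] [DecidableEq ι] [RCLike 𝕜]
    {A : Matrix ι ι 𝕜} (hA : A.IsHermitian) (f : ℝ → ℝ) :
    (cfc f A).trace = ∑ i, (f (hA.eigenvalues i) : 𝕜) := by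
  rw [hA.cfc_eq, IsHermitian.cfc, Unitary.conjStarAlgAut_apply, trace_mul_cycle,
    Unitary.coe_star_mul_self, one_mul, trace_diagonal]
  rfl

end Matrix

open scoped Matrix.Norms.L2Operator in
theorem Continuous.matrix_cfc {X ι : Type*} [TopologicalSpace X] [Fintype ι] [DecidableEq ι]
    {f : ℝ → ℝ} (hf : Continuous f) {a : X → Matrix ι ι ℝ} (ha : Continuous a)
    (ha' : ∀ x, (a x).IsHermitian) : Continuous fun x => cfc f (a x) :=
  Continuous.cfc_of_mem_nhdsSet f (s := Set.univ) univ_mem ha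
    (fun x => (ha' x).isSelfAdjoint) hf.continuousOn

@[fun_prop]
theorem Continuous.matrix_hadamard {X m n R : Type*} [TopologicalSpace X] [TopologicalSpace R]
    [Mul R] [ContinuousMul R] {A B : X → Matrix m n R} (hA : Continuous A) (hB : Continuous B) :
    Continuous fun x => hadamard (A x) (B x) :=
  continuous_matrix fun i j => (hA.matrix_elem i j).mul (hB.matrix_elem i j)

section Norms

variable {m n : ℕ}

theorem frobSq_nonneg (A : Matrix (Fin m) (Fin n) ℝ) : 0 ≤ frobSq A := by
  unfold frobSq; positivity

theorem l21_nonneg (A : Matrix (Fin m) (Fin n) ℝ) : 0 ≤ l21 A := by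
  unfold l21; positivity

theorem l1_nonneg (A : Matrix (Fin m) (Fin n) ℝ) : 0 ≤ l1 A := by
  unfold l1; positivity

theorem nuclearNorm_nonneg (A : Matrix (Fin m) (Fin n) ℝ) : 0 ≤ nuclearNorm A := by
  unfold nuclearNorm; positivity

theorem frob_le_l21 (A : Matrix (Fin m) (Fin n) ℝ) : frob A ≤ l21 A := by
  refine (Real.sqrt_le_left (l21_nonneg A)).mpr ?_
  calc frobSq A = ∑ i, Real.sqrt (∑ j, A i j ^ 2) ^ 2 := by
        simp only [frobSq, Real.sq_sqrt (Finset.sum_nonneg fun _ _ => sq_nonneg _)]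
    _ ≤ l21 A ^ 2 := sum_sq_le_sq_sum_of_nonneg fun _ _ => Real.sqrt_nonneg _

@[fun_prop]
theorem continuous_frobSq : Continuous (frobSq (m := m) (n := n)) := by
  unfold frobSq; fun_prop

@[fun_prop]
theorem continuous_l21 : Continuous (l21 (m := m) (n := n)) := by
  unfold l21; fun_prop

@[fun_prop]
theorem continuous_l1 : Continuous (l1 (m := m) (n := n)) := by
  unfold l1; fun_prop

theorem nuclearNorm_eq_trace_cfc_sqrt (A : Matrix (Fin m) (Fin n) ℝ) :
    nuclearNorm A = (cfc Real.sqrt (Aᴴ * A)).trace :=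
  ((isHermitian_conjTranspose_mul_self A).trace_cfc _).symm

@[fun_prop]
theorem continuous_nuclearNorm : Continuous (nuclearNorm (m := m) (n := n)) := by
  simp only [funext nuclearNorm_eq_trace_cfc_sqrt]
  exact (Continuous.matrix_cfc Real.continuous_sqrt (by fun_prop)
    isHermitian_conjTranspose_mul_self).matrix_trace

attribute [local instance] Matrix.frobeniusNormedAddCommGroup Matrix.frobeniusNormedSpace in
theorem comap_frob_atTop : comap frob atTop = cocompact (Matrix (Fin m) (Fin n) ℝ) := by
  have hfrob : frob (m := m) (n := n) = norm := by
    ext A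
    simp [frob, frobSq, frobenius_norm_def, Real.sqrt_eq_rpow]
  have : ProperSpace (Matrix (Fin m) (Fin n) ℝ) := FiniteDimensional.proper_real _
  rw [hfrob, comap_norm_atTop]
  exact Metric.cobounded_eq_cocompact

end Norms

/-- coercivity and attainment of the ALFS objective.  For α > 0 and
β, γ, η ≥ 0, F(W) = ‖X − XWX‖_F² + α‖W‖_{2,1} + β‖Wᵀ‖_{2,1} + γ‖W‖_* + η‖T ⊙ (WX)‖₁
is coercive (F(W) → ∞ as ‖W‖_F → ∞) and attains its infimum. -/
theorem alfs_objective_coercive_and_attained {d n : ℕ}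
    (X : Matrix (Fin d) (Fin n) ℝ) (T : Matrix (Fin n) (Fin n) ℝ)
    (α β γ η : ℝ) (hα : 0 < α) (hβ : 0 ≤ β) (hγ : 0 ≤ γ) (hη : 0 ≤ η) :
    let F : Matrix (Fin n) (Fin d) ℝ → ℝ := fun W =>
      frobSq (X - X * W * X) + α * l21 W + β * l21 Wᵀ + γ * nuclearNorm W
        + η * l1 (Matrix.hadamard T (W * X))
    Filter.Tendsto F (Filter.comap (fun W : Matrix (Fin n) (Fin d) ℝ => frob W)
        Filter.atTop) Filter.atTop
    ∧ ∃ Wstar : Matrix (Fin n) (Fin d) ℝ, ∀ W, F Wstar ≤ F W := by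
  intro F
  have hF_ge : ∀ W, α * frob W ≤ F W := fun W => by
    have := mul_le_mul_of_nonneg_left (frob_le_l21 W) hα.le
    have := frobSq_nonneg (X - X * W * X)
    have := mul_nonneg hβ (l21_nonneg Wᵀ)
    have := mul_nonneg hγ (nuclearNorm_nonneg W)
    have := mul_nonneg hη (l1_nonneg (hadamard T (W * X)))
    linarith
  have hF_coercive : Tendsto F (comap frob atTop) atTop :=
    tendsto_atTop_mono hF_ge (tendsto_comap.const_mul_atTop hα)
  have hF_cont : Continuous F := by fun_prop
  exact ⟨hF_coercive, hF_cont.exists_forall_le (comap_frob_atTop ▸ hF_coercive)⟩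
end
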